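/- arXiv:2301.04171 — 2 statements merged into one kernel-verified Lean document; each statement's English description precedes it below -/
import Mathlib

section
/- Let P be a 2n×2n complex matrix that is Hermitian and idempotent (P† = P and P·P = P) with Tr(P) = m, where m ≤ n. Then Σ_{j=1}^{n} (P_{2j−1,2j−1} − P_{2j,2j})² ≤ m, and equality holds if and only if P is a diagonal matrix, every diagonal entry of P equals 0 or 1, and for each j = 1, …, n not both P_{2j−1,2j−1} and P_{2j,2j} equal 1 (so exactly m of the pairs (P_{2j−1,2j−1}, P_{2j,2j}) consist of one entry equal to 1 and one equal to 0, and the rest are (0,0)). -/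
open Matrix

/-- The index `2j` (the first member of the `j`-th consecutive pair) in `Fin (2*n)`. -/
def pairIdx0 (n : ℕ) (j : Fin n) : Fin (2 * n) :=
  ⟨2 * j.val, by have := j.isLt; omega⟩

/-- The index `2j+1` (the second member of the `j`-th consecutive pair) in `Fin (2*n)`. -/
def pairIdx1 (n : ℕ) (j : Fin n) : Fin (2 * n) :=
  ⟨2 * j.val + 1, by have := j.isLt; omega⟩

/-- Equivalence pairing `Fin n × Fin 2` with `Fin (2*n)`. -/
def pairEquiv (n : ℕ) : Fin n × Fin 2 ≃ Fin (2 * n) where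
  toFun p := ⟨2 * p.1.val + p.2.val, by have := p.1.isLt; have := p.2.isLt; omega⟩
  invFun i := (⟨i.val / 2, by have := i.isLt; omega⟩, ⟨i.val % 2, by omega⟩)
  left_inv := by
    rintro ⟨⟨j, hj⟩, ⟨k, hk⟩⟩
    simp only [Prod.mk.injEq, Fin.mk.injEq]
    omega
  right_inv := by
    rintro ⟨i, hi⟩
    simp only [Fin.mk.injEq]
    omega

lemma sum_pairs {n : ℕ} (f : Fin (2 * n) → ℝ) :
    ∑ i, f i = ∑ j : Fin n, (f (pairIdx0 n j) + f (pairIdx1 n j)) := by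
  rw [← Equiv.sum_comp (pairEquiv n) f, Fintype.sum_prod_type]
  refine Finset.sum_congr rfl fun j _ => ?_
  rw [Fin.sum_univ_two]
  have e0 : pairEquiv n (j, 0) = pairIdx0 n j := Fin.ext (by simp [pairEquiv, pairIdx0])
  have e1 : pairEquiv n (j, 1) = pairIdx1 n j := Fin.ext (by simp [pairEquiv, pairIdx1])
  rw [e0, e1]

/-- Let `P` be a `2n × 2n` Hermitian idempotent complex matrix with trace `m ≤ n`.  Then
`∑ j (P_{2j-1,2j-1} - P_{2j,2j})² ≤ m`, with equality iff `P` is diagonal, every diagonal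
entry of `P` is `0` or `1`, and no consecutive pair of diagonal entries are both `1`. -/
theorem stmt9 (n m : ℕ) (hm : m ≤ n)
    (P : Matrix (Fin (2 * n)) (Fin (2 * n)) ℂ)
    (hHerm : Pᴴ = P) (hIdem : P * P = P) (htr : Matrix.trace P = (m : ℂ)) :
    (∑ j : Fin n,
        ((P (pairIdx0 n j) (pairIdx0 n j)).re - (P (pairIdx1 n j) (pairIdx1 n j)).re) ^ 2
      ≤ (m : ℝ)) ∧
    ((∑ j : Fin n,
        ((P (pairIdx0 n j) (pairIdx0 n j)).re - (P (pairIdx1 n j) (pairIdx1 n j)).re) ^ 2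
      = (m : ℝ)) ↔
      ((∀ i j, i ≠ j → P i j = 0) ∧
       (∀ i, P i i = 0 ∨ P i i = 1) ∧
       (∀ j : Fin n,
          ¬(P (pairIdx0 n j) (pairIdx0 n j) = 1 ∧ P (pairIdx1 n j) (pairIdx1 n j) = 1)))) := by
  set a : Fin (2 * n) → ℝ := fun i => (P i i).re with ha
  -- diagonal identity
  have hdiag : ∀ i, P i i = ∑ k, (Complex.normSq (P i k) : ℂ) := by
    intro i
    have h1 : (P * P) i i = P i i := by rw [hIdem]
    rw [Matrix.mul_apply] at h1
    rw [← h1]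
    refine Finset.sum_congr rfl fun k _ => ?_
    have hk : P k i = (starRingEnd ℂ) (P i k) := by
      have := congrFun (congrFun hHerm i) k
      simp only [Matrix.conjTranspose_apply] at this
      have := congrArg (starRingEnd ℂ) this
      simpa using this
    rw [hk, Complex.mul_conj]
  have him : ∀ i, (P i i).im = 0 := by
    intro i; rw [hdiag i]; simp
  have hre : ∀ i, a i = ∑ k, Complex.normSq (P i k) := by
    intro i
    have := congrArg Complex.re (hdiag i)
    simpa [ha, Complex.re_sum] using this
  have ha0 : ∀ i, 0 ≤ a i := by
    intro i; rw [hre i]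
    exact Finset.sum_nonneg fun k _ => Complex.normSq_nonneg _
  have hnsq : ∀ i, Complex.normSq (P i i) = a i ^ 2 := by
    intro i
    rw [Complex.normSq_apply, him i]
    ring
  have hsq : ∀ i, a i ^ 2 ≤ a i := by
    intro i
    have h := Finset.single_le_sum (f := fun k => Complex.normSq (P i k))
      (fun k _ => Complex.normSq_nonneg _) (Finset.mem_univ i)
    simp only [← hre i] at h
    rw [← hnsq i]
    exact h
  have htr' : ∑ i, a i = (m : ℝ) := by
    have := congrArg Complex.re htr
    simpa [Matrix.trace, Matrix.diag, Complex.re_sum, ha] using this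
  have hpairle : ∀ j : Fin n,
      (a (pairIdx0 n j) - a (pairIdx1 n j)) ^ 2 ≤ a (pairIdx0 n j) + a (pairIdx1 n j) := by
    intro j
    have h1 := hsq (pairIdx0 n j)
    have h2 := hsq (pairIdx1 n j)
    have h3 := ha0 (pairIdx0 n j)
    have h4 := ha0 (pairIdx1 n j)
    nlinarith [mul_nonneg h3 h4]
  have hsumpairs : ∑ j : Fin n, (a (pairIdx0 n j) + a (pairIdx1 n j)) = (m : ℝ) := by
    rw [← sum_pairs a, htr']
  have hle : ∑ j : Fin n,
      (a (pairIdx0 n j) - a (pairIdx1 n j)) ^ 2 ≤ (m : ℝ) := by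
    rw [← hsumpairs]
    exact Finset.sum_le_sum fun j _ => hpairle j
  refine ⟨hle, ?_, ?_⟩
  · -- equality → structure
    intro heq
    have heq' : ∑ j : Fin n, (a (pairIdx0 n j) - a (pairIdx1 n j)) ^ 2
        = ∑ j : Fin n, (a (pairIdx0 n j) + a (pairIdx1 n j)) := by
      rw [heq, hsumpairs]
    have hptwise := (Finset.sum_eq_sum_iff_of_le (fun j _ => hpairle j)).mp heq'
    have hpair : ∀ j : Fin n,
        a (pairIdx0 n j) ^ 2 = a (pairIdx0 n j) ∧
        a (pairIdx1 n j) ^ 2 = a (pairIdx1 n j) ∧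
        a (pairIdx0 n j) * a (pairIdx1 n j) = 0 := by
      intro j
      have h := hptwise j (Finset.mem_univ j)
      have h1 := hsq (pairIdx0 n j)
      have h2 := hsq (pairIdx1 n j)
      have h3 := ha0 (pairIdx0 n j)
      have h4 := ha0 (pairIdx1 n j)
      have hmul : 0 ≤ a (pairIdx0 n j) * a (pairIdx1 n j) := mul_nonneg h3 h4
      refine ⟨by nlinarith, by nlinarith, by nlinarith⟩
    have hall : ∀ i, a i ^ 2 = a i := by
      intro i
      have hj : (i.val / 2) < n := by have := i.isLt; omega
      by_cases h : i.val % 2 = 0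
      · have hi : i = pairIdx0 n ⟨i.val / 2, hj⟩ := by
          apply Fin.ext; simp [pairIdx0]; omega
        rw [hi]; exact (hpair ⟨i.val / 2, hj⟩).1
      · have hi : i = pairIdx1 n ⟨i.val / 2, hj⟩ := by
          apply Fin.ext; simp [pairIdx1]; omega
        rw [hi]; exact (hpair ⟨i.val / 2, hj⟩).2.1
    have hoffdiag : ∀ i k, i ≠ k → P i k = 0 := by
      intro i k hik
      have hsum : ∑ k, Complex.normSq (P i k) = Complex.normSq (P i i) := by
        rw [← hre i, hnsq i, hall i]
      have hrest : ∑ k ∈ Finset.univ.erase i, Complex.normSq (P i k) = 0 := by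
        have := Finset.add_sum_erase Finset.univ (fun k => Complex.normSq (P i k))
          (Finset.mem_univ i)
        rw [hsum] at this
        linarith
      have := (Finset.sum_eq_zero_iff_of_nonneg
        (fun k _ => Complex.normSq_nonneg (P i k))).mp hrest k
        (Finset.mem_erase.mpr ⟨Ne.symm hik, Finset.mem_univ k⟩)
      exact Complex.normSq_eq_zero.mp this
    refine ⟨hoffdiag, ?_, ?_⟩
    · intro i
      have h := hall i
      have : a i = 0 ∨ a i = 1 := by
        rcases mul_eq_zero.mp (show a i * (a i - 1) = 0 by nlinarith) with h' | h'
        · exact Or.inl h'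
        · exact Or.inr (by linarith)
      rcases this with h' | h'
      · left; exact Complex.ext (by simpa [ha] using h') (him i)
      · right; exact Complex.ext (by simpa [ha] using h') (by simpa using him i)
    · intro j ⟨h0, h1⟩
      have := (hpair j).2.2
      rw [show a (pairIdx0 n j) = 1 by simp [ha, h0],
          show a (pairIdx1 n j) = 1 by simp [ha, h1]] at this
      norm_num at this
  · -- structure → equality
    rintro ⟨hd, h01, hnb⟩
    have hval : ∀ i, a i = 0 ∨ a i = 1 := by
      intro i
      rcases h01 i with h | h
      · left; simp [ha, h]
      · right; simp [ha, h]
    have hterm : ∀ j : Fin n,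
        (a (pairIdx0 n j) - a (pairIdx1 n j)) ^ 2
          = a (pairIdx0 n j) + a (pairIdx1 n j) := by
      intro j
      rcases h01 (pairIdx0 n j) with h0 | h0 <;> rcases h01 (pairIdx1 n j) with h1 | h1
      · simp [ha, h0, h1]
      · simp [ha, h0, h1]
      · simp [ha, h0, h1]
      · exact absurd ⟨h0, h1⟩ (hnb j)
    calc ∑ j : Fin n, (a (pairIdx0 n j) - a (pairIdx1 n j)) ^ 2
        = ∑ j : Fin n, (a (pairIdx0 n j) + a (pairIdx1 n j)) :=
          Finset.sum_congr rfl fun j _ => hterm j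
      _ = (m : ℝ) := hsumpairs
end

section
/- Let ν ∈ {0, −1, −2} and m = 4 + ν. Let ζ be an 8×m complex matrix with orthonormal columns (ζ†ζ = I_m), let P = ζζ†, write ζ₊ for the first 4 rows of ζ and ζ₋ for the last 4 rows, let D be the 8×8 block-diagonal Hermitian matrix with blocks ζ₊ζ₊† and ζ₋ζ₋†, and let λ₁, …, λ₈ be the eigenvalues of D. Group the indices 1,…,8 into the four consecutive pairs (1,2), (3,4), (5,6), (7,8). Then the two conditions (a) Σ_{i=1}^{8} max(λ_i − 1/2, 0) = m/2 and (b) Σ_{j=1}^{4} (P_{2j−1,2j−1} − P_{2j,2j})² = m hold simultaneously if and only if P is a diagonal matrix whose diagonal entries all equal 0 or 1, exactly m diagonal entries equal 1, and for each pair j not both entries P_{2j−1,2j−1} and P_{2j,2j} equal 1. -/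
/-! `P = ζ ζᴴ` is an orthogonal projection of trace `m`, so its diagonal entries `pᵢ` lie in
`[0, 1]`, sum to `m`, and `∑ₖ |Pᵢₖ|² = pᵢ`. For `p, q ∈ [0, 1]` one has `(p - q)² ≤ p + q`, with
equality iff `p, q ∈ {0, 1}` are not both `1`; so condition (b), which says that the sum of the
left-hand sides over the four pairs equals `m`, the sum of the right-hand sides, forces equality in
every pair. Then each `pᵢ ∈ {0, 1}`, and `∑ₖ |Pᵢₖ|² = pᵢ = pᵢ²` kills the off-diagonal entries.
Conversely, once `P` has no intervalley entries, `D` is `P` itself up to reindexing, hence a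
projection: its eigenvalues are `0` or `1`, and (a) reads `tr D / 2 = m / 2`. -/

open Matrix

/-- Embedding of the first four (valley `+`) indices into `Fin 8`. -/
def loIdx (i : Fin 4) : Fin 8 := ⟨i.val, by have := i.isLt; omega⟩

/-- Embedding of the last four (valley `-`) indices into `Fin 8`. -/
def hiIdx (i : Fin 4) : Fin 8 := ⟨4 + i.val, by have := i.isLt; omega⟩

/-- The first member `2j` of the `j`-th consecutive index pair in `Fin 8`. -/
def pairA (j : Fin 4) : Fin 8 := ⟨2 * j.val, by have := j.isLt; omega⟩

/-- The second member `2j+1` of the `j`-th consecutive index pair in `Fin 8`. -/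
def pairB (j : Fin 4) : Fin 8 := ⟨2 * j.val + 1, by have := j.isLt; omega⟩

open Finset

lemma sq_sub_le_add_of_mem_Icc {a b : ℝ} (ha : a ∈ Set.Icc 0 1) (hb : b ∈ Set.Icc 0 1) :
    (a - b) ^ 2 ≤ a + b := by
  obtain ⟨ha₀, ha₁⟩ := ha
  obtain ⟨hb₀, hb₁⟩ := hb
  nlinarith [mul_nonneg ha₀ hb₀]

lemma sq_sub_eq_add_iff_of_mem_Icc {a b : ℝ} (ha : a ∈ Set.Icc 0 1) (hb : b ∈ Set.Icc 0 1) :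
    (a - b) ^ 2 = a + b ↔ (a = 0 ∨ a = 1) ∧ (b = 0 ∨ b = 1) ∧ ¬(a = 1 ∧ b = 1) := by
  obtain ⟨ha₀, ha₁⟩ := ha
  obtain ⟨hb₀, hb₁⟩ := hb
  constructor
  · intro h
    -- `a + b - (a - b)² = a (1 - a) + b (1 - b) + 2 a b`, a sum of nonnegative terms
    have hab : a * b = 0 := by
      nlinarith [mul_nonneg ha₀ (sub_nonneg.2 ha₁), mul_nonneg hb₀ (sub_nonneg.2 hb₁)]
    have ha' : a * (1 - a) = 0 := by nlinarith [mul_nonneg hb₀ (sub_nonneg.2 hb₁)]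
    have hb' : b * (1 - b) = 0 := by nlinarith [mul_nonneg ha₀ (sub_nonneg.2 ha₁)]
    refine ⟨?_, ?_, fun ⟨h₁, h₂⟩ => by simp [h₁, h₂] at hab⟩
    · rcases mul_eq_zero.1 ha' with h | h
      exacts [Or.inl h, Or.inr (by linarith)]
    · rcases mul_eq_zero.1 hb' with h | h
      exacts [Or.inl h, Or.inr (by linarith)]
  · rintro ⟨rfl | rfl, rfl | rfl, hab⟩
    exacts [by norm_num, by norm_num, by norm_num, absurd ⟨rfl, rfl⟩ hab]

lemma exists_pairA_or_pairB (i : Fin 8) : ∃ j : Fin 4, pairA j = i ∨ pairB j = i := by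
  refine ⟨⟨i.val / 2, by omega⟩, ?_⟩
  simp only [pairA, pairB, Fin.ext_iff]
  omega

lemma sum_pairA_add_pairB {M : Type*} [AddCommMonoid M] (f : Fin 8 → M) :
    ∑ j : Fin 4, (f (pairA j) + f (pairB j)) = ∑ i, f i := by
  simp only [Fin.sum_univ_four, Fin.sum_univ_eight, add_assoc]
  rfl

lemma sum_sq_sub_pairs_eq_sum_iff (p : Fin 8 → ℝ) (hp : ∀ i, p i ∈ Set.Icc 0 1) :
    ∑ j : Fin 4, (p (pairA j) - p (pairB j)) ^ 2 = ∑ i, p i ↔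
      (∀ i, p i = 0 ∨ p i = 1) ∧ ∀ j, ¬(p (pairA j) = 1 ∧ p (pairB j) = 1) := by
  rw [← sum_pairA_add_pairB,
    sum_eq_sum_iff_of_le fun j _ => sq_sub_le_add_of_mem_Icc (hp _) (hp _)]
  simp only [mem_univ, true_implies, sq_sub_eq_add_iff_of_mem_Icc (hp _) (hp _)]
  constructor
  · intro h
    refine ⟨fun i => ?_, fun j => (h j).2.2⟩
    obtain ⟨j, rfl | rfl⟩ := exists_pairA_or_pairB i
    exacts [(h j).1, (h j).2.1]
  · exact fun ⟨h01, hpair⟩ j => ⟨h01 _, h01 _, hpair j⟩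

lemma ncard_eq_sum_of_forall_eq_zero_or_one {ι : Type*} [Fintype ι] {p : ι → ℝ}
    (hp : ∀ i, p i = 0 ∨ p i = 1) : ({i | p i = 1}.ncard : ℝ) = ∑ i, p i := by
  classical
  rw [Set.ncard_eq_toFinset_card', Set.toFinset_ofPred, ← sum_boole]
  refine sum_congr rfl fun i _ => ?_
  rcases hp i with h | h <;> simp [h]

section StarProjection

variable {n : Type*} [Fintype n] {P : Matrix n n ℂ}

lemma IsStarProjection.apply_symm (hP : IsStarProjection P) (i j : n) :
    P j i = star (P i j) := by
  rw [← star_apply, hP.isSelfAdjoint.star_eq]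

lemma IsStarProjection.im_apply_self (hP : IsStarProjection P) (i : n) : (P i i).im = 0 :=
  Complex.conj_eq_iff_im.1 (hP.apply_symm i i).symm

lemma IsStarProjection.apply_self_eq_ofReal_iff (hP : IsStarProjection P) (i : n) (x : ℝ) :
    P i i = x ↔ (P i i).re = x := by
  simp [Complex.ext_iff, hP.im_apply_self]

lemma IsStarProjection.sum_normSq_apply (hP : IsStarProjection P) (i : n) :
    ∑ k, Complex.normSq (P i k) = (P i i).re := by
  conv_rhs => rw [← hP.isIdempotentElem.eq, mul_apply]
  simp only [hP.apply_symm i, Complex.star_def, Complex.mul_conj, Complex.re_sum,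
    Complex.ofReal_re]

lemma IsStarProjection.re_apply_self_mem_Icc (hP : IsStarProjection P) (i : n) :
    (P i i).re ∈ Set.Icc 0 1 := by
  have hsum := hP.sum_normSq_apply i
  have hle : Complex.normSq (P i i) ≤ (P i i).re :=
    hsum ▸ single_le_sum (fun k _ => Complex.normSq_nonneg (P i k)) (mem_univ i)
  have hnonneg : 0 ≤ (P i i).re := hsum ▸ sum_nonneg fun k _ => Complex.normSq_nonneg _
  rw [Complex.normSq_apply] at hle
  exact ⟨hnonneg, by nlinarith [mul_self_nonneg (P i i).im]⟩

lemma IsStarProjection.apply_eq_zero_of_re_apply_self (hP : IsStarProjection P) {i j : n}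
    (hi : (P i i).re = 0 ∨ (P i i).re = 1) (hij : i ≠ j) : P i j = 0 := by
  classical
  have hdiag : Complex.normSq (P i i) = (P i i).re := by
    rcases hi with h | h <;> simp [Complex.normSq_apply, hP.im_apply_self, h]
  have hrest : ∑ k ∈ univ.erase i, Complex.normSq (P i k) = 0 := by
    have := hP.sum_normSq_apply i
    rw [← add_sum_erase _ _ (mem_univ i), hdiag] at this
    linarith
  have := (sum_eq_zero_iff_of_nonneg fun k _ => Complex.normSq_nonneg (P i k)).1 hrest j
    (mem_erase.2 ⟨hij.symm, mem_univ j⟩)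
  exact Complex.normSq_eq_zero.1 this

end StarProjection

namespace Matrix

section MulConjTranspose

variable {n k : Type*} [Fintype n] [Fintype k] [DecidableEq k] {A : Matrix n k ℂ}

lemma isStarProjection_mul_conjTranspose_self (hA : Aᴴ * A = 1) :
    IsStarProjection (A * Aᴴ) where
  isIdempotentElem := by
    rw [IsIdempotentElem, Matrix.mul_assoc, ← Matrix.mul_assoc Aᴴ, hA, Matrix.one_mul]
  isSelfAdjoint := (isHermitian_mul_conjTranspose_self A).isSelfAdjoint

lemma trace_mul_conjTranspose_self (hA : Aᴴ * A = 1) : (A * Aᴴ).trace = Fintype.card k := by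
  rw [trace_mul_comm, hA, trace_one]

end MulConjTranspose

lemma IsHermitian.eigenvalues_eq_zero_or_one {n : Type*} [Fintype n] [DecidableEq n]
    {A : Matrix n n ℂ} (hA : A.IsHermitian) (hA' : IsIdempotentElem A) (i : n) :
    hA.eigenvalues i = 0 ∨ hA.eigenvalues i = 1 :=
  hA'.spectrum_subset ℝ (hA.eigenvalues_mem_spectrum_real i)

lemma IsHermitian.sum_max_eigenvalues_sub_half {n : Type*} [Fintype n] [DecidableEq n]
    {A : Matrix n n ℂ} (hA : A.IsHermitian) (hA' : IsIdempotentElem A) :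
    ∑ i, max (hA.eigenvalues i - 1 / 2) 0 = A.trace.re / 2 := by
  have : ∀ i, max (hA.eigenvalues i - 1 / 2) 0 = hA.eigenvalues i / 2 := fun i => by
    rcases hA.eigenvalues_eq_zero_or_one hA' i with h | h <;> norm_num [h]
  simp only [this, ← sum_div, hA.trace_eq_sum_eigenvalues, Complex.re_sum,
    Complex.coe_algebraMap, Complex.ofReal_re]

lemma trace_submatrix_equiv {α n l : Type*} [AddCommMonoid α] [Fintype n] [Fintype l]
    (M : Matrix n n α) (e : l ≃ n) : (M.submatrix e e).trace = M.trace :=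
  e.sum_comp M.diag

lemma submatrix_id_mul_conjTranspose {l m k : Type*} [Fintype k] (A : Matrix m k ℂ)
    (f : l → m) : A.submatrix f id * (A.submatrix f id)ᴴ = (A * Aᴴ).submatrix f f := by
  rw [conjTranspose_submatrix, submatrix_mul _ _ _ _ _ Function.bijective_id]

lemma fromBlocks_submatrix_castAdd_natAdd {α : Type*} [Zero α] {a b : ℕ}
    (M : Matrix (Fin (a + b)) (Fin (a + b)) α)
    (h₁₂ : ∀ i j, M (Fin.castAdd b i) (Fin.natAdd a j) = 0)
    (h₂₁ : ∀ i j, M (Fin.natAdd a i) (Fin.castAdd b j) = 0) :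
    fromBlocks (M.submatrix (Fin.castAdd b) (Fin.castAdd b)) 0 0
      (M.submatrix (Fin.natAdd a) (Fin.natAdd a)) =
        M.submatrix finSumFinEquiv finSumFinEquiv := by
  ext (i | i) (j | j) <;> simp [h₁₂, h₂₁]

lemma fromBlocks_mul_conjTranspose_eq_submatrix {a b : ℕ} {k : Type*} [Fintype k]
    (A : Matrix (Fin (a + b)) k ℂ)
    (hcross : ∀ i j, (A * Aᴴ) (Fin.castAdd b i) (Fin.natAdd a j) = 0) :
    fromBlocks (A.submatrix (Fin.castAdd b) id * (A.submatrix (Fin.castAdd b) id)ᴴ) 0 0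
      (A.submatrix (Fin.natAdd a) id * (A.submatrix (Fin.natAdd a) id)ᴴ) =
        (A * Aᴴ).submatrix finSumFinEquiv finSumFinEquiv := by
  rw [submatrix_id_mul_conjTranspose, submatrix_id_mul_conjTranspose]
  refine fromBlocks_submatrix_castAdd_natAdd _ hcross fun i j => ?_
  rw [← (isHermitian_mul_conjTranspose_self A).apply, hcross, star_zero]

lemma sum_max_eigenvalues_sub_half_fromBlocks {a b k : ℕ}
    {A : Matrix (Fin (a + b)) (Fin k) ℂ} (hA : Aᴴ * A = 1)
    (hD : (fromBlocks (A.submatrix (Fin.castAdd b) id * (A.submatrix (Fin.castAdd b) id)ᴴ) 0 0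
      (A.submatrix (Fin.natAdd a) id * (A.submatrix (Fin.natAdd a) id)ᴴ)).IsHermitian)
    (hcross : ∀ i j, (A * Aᴴ) (Fin.castAdd b i) (Fin.natAdd a j) = 0) :
    ∑ i, max (hD.eigenvalues i - 1 / 2) 0 = k / 2 := by
  have hD_eq := fromBlocks_mul_conjTranspose_eq_submatrix A hcross
  have hidem : IsIdempotentElem ((A * Aᴴ).submatrix finSumFinEquiv finSumFinEquiv) := by
    rw [IsIdempotentElem, submatrix_mul_equiv,
      (isStarProjection_mul_conjTranspose_self hA).isIdempotentElem.eq]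
  rw [hD.sum_max_eigenvalues_sub_half (hD_eq ▸ hidem), hD_eq, trace_submatrix_equiv,
    trace_mul_conjTranspose_self hA]
  simp

end Matrix

theorem stmt16_general
    (m : ℕ)
    (ζ : Matrix (Fin 8) (Fin m) ℂ) (hζ : ζᴴ * ζ = 1)
    (hD : (Matrix.fromBlocks
        ((ζ.submatrix loIdx id) * (ζ.submatrix loIdx id)ᴴ) 0 0
        ((ζ.submatrix hiIdx id) * (ζ.submatrix hiIdx id)ᴴ)).IsHermitian) :
    ((∑ i, max (hD.eigenvalues i - 1 / 2) 0 = (m : ℝ) / 2) ∧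
     (∑ j : Fin 4,
        (((ζ * ζᴴ) (pairA j) (pairA j)).re - ((ζ * ζᴴ) (pairB j) (pairB j)).re) ^ 2
          = (m : ℝ)))
    ↔
    ((∀ i j, i ≠ j → (ζ * ζᴴ) i j = 0) ∧
     (∀ i, (ζ * ζᴴ) i i = 0 ∨ (ζ * ζᴴ) i i = 1) ∧
     Set.ncard {i : Fin 8 | (ζ * ζᴴ) i i = 1} = m ∧
     (∀ j : Fin 4,
        ¬((ζ * ζᴴ) (pairA j) (pairA j) = 1 ∧ (ζ * ζᴴ) (pairB j) (pairB j) = 1))) := by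
  have hP := isStarProjection_mul_conjTranspose_self hζ
  have htrace : ∑ i, ((ζ * ζᴴ) i i).re = m := by
    simpa [trace, Complex.re_sum] using congrArg Complex.re (trace_mul_conjTranspose_self hζ)
  have hpairs := sum_sq_sub_pairs_eq_sum_iff _ hP.re_apply_self_mem_Icc
  have h0 i : (ζ * ζᴴ) i i = 0 ↔ ((ζ * ζᴴ) i i).re = 0 := by
    exact_mod_cast hP.apply_self_eq_ofReal_iff i 0
  have h1 i : (ζ * ζᴴ) i i = 1 ↔ ((ζ * ζᴴ) i i).re = 1 := by
    exact_mod_cast hP.apply_self_eq_ofReal_iff i 1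
  simp only [h0, h1, htrace] at hpairs ⊢
  constructor
  · rintro ⟨-, hb⟩
    obtain ⟨h01, hpair⟩ := hpairs.1 hb
    refine ⟨fun i j hij => hP.apply_eq_zero_of_re_apply_self (h01 i) hij, h01, ?_, hpair⟩
    exact_mod_cast (ncard_eq_sum_of_forall_eq_zero_or_one h01).trans htrace
  · rintro ⟨hoff, h01, -, hpair⟩
    -- `loIdx` and `hiIdx` are definitionally `Fin.castAdd 4` and `Fin.natAdd 4`
    refine ⟨sum_max_eigenvalues_sub_half_fromBlocks hζ hD fun i j => hoff _ _ ?_,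
      hpairs.2 ⟨h01, hpair⟩⟩
    exact Fin.ne_of_val_ne (by simp only [Fin.val_castAdd, Fin.val_natAdd]; omega)

/-- For filling `ν ∈ {0, -1, -2}` and `m = 4 + ν`, with `ζ` an `8 × m` complex matrix
with orthonormal columns, `P = ζ ζᴴ`, `ζ₊`/`ζ₋` the first/last four rows of `ζ`,
`D = fromBlocks (ζ₊ζ₊ᴴ) 0 0 (ζ₋ζ₋ᴴ)` Hermitian with eigenvalues `λ i`:
the conditions `∑ i, max (λ i - 1/2) 0 = m/2` and
`∑ j (P_{2j-1,2j-1} - P_{2j,2j})² = m` hold simultaneously if and only if `P` is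
diagonal with all diagonal entries `0` or `1`, exactly `m` diagonal entries equal to
`1`, and no consecutive pair of diagonal entries both equal to `1`. -/
theorem stmt16 (ν : ℤ) (hν : ν = 0 ∨ ν = -1 ∨ ν = -2)
    (m : ℕ) (hm : (m : ℤ) = 4 + ν)
    (ζ : Matrix (Fin 8) (Fin m) ℂ) (hζ : ζᴴ * ζ = 1)
    (hD : (Matrix.fromBlocks
        ((ζ.submatrix loIdx id) * (ζ.submatrix loIdx id)ᴴ) 0 0
        ((ζ.submatrix hiIdx id) * (ζ.submatrix hiIdx id)ᴴ)).IsHermitian) :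
    ((∑ i, max (hD.eigenvalues i - 1 / 2) 0 = (m : ℝ) / 2) ∧
     (∑ j : Fin 4,
        (((ζ * ζᴴ) (pairA j) (pairA j)).re - ((ζ * ζᴴ) (pairB j) (pairB j)).re) ^ 2
          = (m : ℝ)))
    ↔
    ((∀ i j, i ≠ j → (ζ * ζᴴ) i j = 0) ∧
     (∀ i, (ζ * ζᴴ) i i = 0 ∨ (ζ * ζᴴ) i i = 1) ∧
     Set.ncard {i : Fin 8 | (ζ * ζᴴ) i i = 1} = m ∧
     (∀ j : Fin 4,
        ¬((ζ * ζᴴ) (pairA j) (pairA j) = 1 ∧ (ζ * ζᴴ) (pairB j) (pairB j) = 1))) :=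
  stmt16_general m ζ hζ hD
end
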